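/- arXiv:2210.09720 — 2 statements merged into one kernel-verified Lean document; each statement's English description precedes it below -/
import Mathlib

section
/- Let $E$ be a Riesz space, $u_1, \ldots, u_m, v_1, \ldots, v_n \in E$, and suppose $e = u_1 \sqcup \cdots \sqcup u_m = v_1 \sqcup \cdots \sqcup v_n$ are two decompositions of $e$ into pairwise disjoint summands. Then there exists a doubly indexed family $(w_{i,k})$, $1 \le i \le m$, $1 \le k \le n$, of pairwise disjoint elements of $E$ such that $u_i = \bigsqcup_{k=1}^n w_{i,k}$ for each $i$ and $v_k = \bigsqcup_{i=1}^m w_{i,k}$ for each $k$. -/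
/-!
Split every summand into its positive and negative parts. Disjointness of the `u i` makes
`(∑ u i)⁺ = ∑ (u i)⁺` and `(∑ u i)⁻ = ∑ (u i)⁻`, so the two decompositions of `e` yield two
decompositions of `e⁺` (and of `e⁻`) into disjoint positive summands. For positive disjoint
summands, `x ⊓ ·` is additive, which makes `(u i)⁺ ⊓ (v k)⁺` a common refinement; the witness
is `w i k = (u i)⁺ ⊓ (v k)⁺ - (u i)⁻ ⊓ (v k)⁻`.
-/

/-- Disjointness in a Riesz space: `|x| ⊓ |y| = 0`. -/
def RDisjoint {E : Type*} [Lattice E] [AddCommGroup E] (x y : E) : Prop :=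
  |x| ⊓ |y| = 0

/-- `x` is a fragment of `e` (lateral order `x ⊑ e`): `x ⊥ (e - x)`. -/
def IsFragment {E : Type*} [Lattice E] [AddCommGroup E] (x e : E) : Prop :=
  RDisjoint x (e - x)

/-- An orthogonally additive operator. -/
def IsOAO {E F : Type*} [Lattice E] [AddCommGroup E] [Lattice F] [AddCommGroup F]
    (T : E → F) : Prop :=
  ∀ x y : E, RDisjoint x y → T (x + y) = T x + T y

variable {E F : Type*}
  [Lattice E] [AddCommGroup E] [CovariantClass E E (· + ·) (· ≤ ·)]
  [Lattice F] [AddCommGroup F] [CovariantClass F F (· + ·) (· ≤ ·)]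

open Finset Function

section Lattice

variable {α ι κ : Type*} [Lattice α] [Zero α]

lemma inf_eq_zero_of_le_of_le {a b c d : α} (ha : 0 ≤ a) (hb : 0 ≤ b) (hac : a ≤ c)
    (hbd : b ≤ d) (h : c ⊓ d = 0) : a ⊓ b = 0 :=
  le_antisymm (h ▸ inf_le_inf hac hbd) (le_inf ha hb)

lemma pairwise_inf_inf_eq_zero {a : ι → α} {b : κ → α} (ha₀ : ∀ i, 0 ≤ a i)
    (hb₀ : ∀ k, 0 ≤ b k) (ha : Pairwise fun i j => a i ⊓ a j = 0)
    (hb : Pairwise fun k l => b k ⊓ b l = 0) :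
    Pairwise fun p q : ι × κ => (a p.1 ⊓ b p.2) ⊓ (a q.1 ⊓ b q.2) = 0 := by
  rintro ⟨i, k⟩ ⟨j, l⟩ hne
  rw [inf_inf_inf_comm]
  obtain hij | hkl := not_and_or.mp (mt Prod.ext_iff.mpr hne)
  · rw [ha hij, inf_eq_left.mpr (le_inf (hb₀ k) (hb₀ l))]
  · rw [hb hkl, inf_eq_right.mpr (le_inf (ha₀ i) (ha₀ j))]

end Lattice

section LatticeOrderedAddCommGroup

variable {α ι κ : Type*} [Lattice α] [AddCommGroup α] [AddLeftMono α]

lemma sup_eq_add_of_inf_eq_zero {a b : α} (h : a ⊓ b = 0) : a ⊔ b = a + b := by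
  rw [← inf_add_sup a b, h, zero_add]

lemma posPart_sub_of_inf_eq_zero {a b : α} (h : a ⊓ b = 0) : (a - b)⁺ = a := by
  rw [posPart_def, ← sub_self b, ← sup_sub, sup_eq_add_of_inf_eq_zero h, add_sub_cancel_right]

lemma negPart_sub_of_inf_eq_zero {a b : α} (h : a ⊓ b = 0) : (a - b)⁻ = b := by
  rw [negPart_def, neg_sub, ← posPart_def, posPart_sub_of_inf_eq_zero (inf_comm a b ▸ h)]

lemma abs_sub_of_inf_eq_zero {a b : α} (h : a ⊓ b = 0) : |a - b| = a ⊔ b := by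
  rw [← posPart_add_negPart, posPart_sub_of_inf_eq_zero h, negPart_sub_of_inf_eq_zero h,
    sup_eq_add_of_inf_eq_zero h]

lemma rdisjoint_sub_sub {a b c d : α} (hab : a ⊓ b = 0) (hcd : c ⊓ d = 0)
    (hac : a ⊓ c = 0) (had : a ⊓ d = 0) (hbc : b ⊓ c = 0) (hbd : b ⊓ d = 0) :
    RDisjoint (a - b) (c - d) := by
  let _ : DistribLattice α := AddCommGroup.toDistribLattice α
  rw [RDisjoint, abs_sub_of_inf_eq_zero hab, abs_sub_of_inf_eq_zero hcd, inf_sup_right,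
    inf_sup_left, inf_sup_left, hac, had, hbc, hbd, sup_idem, sup_idem]

lemma posPart_le_abs (x : α) : x⁺ ≤ |x| := sup_le (le_abs_self x) (abs_nonneg x)

lemma negPart_le_abs (x : α) : x⁻ ≤ |x| := sup_le (neg_le_abs x) (abs_nonneg x)

lemma Pairwise.posPart_inf_posPart {f : ι → α} (hf : Pairwise (RDisjoint on f)) :
    Pairwise fun i j => (f i)⁺ ⊓ (f j)⁺ = 0 :=
  fun _ _ hij => inf_eq_zero_of_le_of_le (posPart_nonneg _) (posPart_nonneg _)
    (posPart_le_abs _) (posPart_le_abs _) (hf hij)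

lemma Pairwise.negPart_inf_negPart {f : ι → α} (hf : Pairwise (RDisjoint on f)) :
    Pairwise fun i j => (f i)⁻ ⊓ (f j)⁻ = 0 :=
  fun _ _ hij => inf_eq_zero_of_le_of_le (negPart_nonneg _) (negPart_nonneg _)
    (negPart_le_abs _) (negPart_le_abs _) (hf hij)

lemma Pairwise.posPart_inf_negPart {f : ι → α} (hf : Pairwise (RDisjoint on f)) (i j : ι) :
    (f i)⁺ ⊓ (f j)⁻ = 0 := by
  obtain rfl | hij := eq_or_ne i j
  · exact posPart_inf_negPart_eq_zero _
  · exact inf_eq_zero_of_le_of_le (posPart_nonneg _) (negPart_nonneg _)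
      (posPart_le_abs _) (negPart_le_abs _) (hf hij)

-- Since the summands are positive and disjoint, sums of them are suprema, and `x ⊓ ·`
-- distributes over suprema.
lemma inf_sum_eq_sum_inf {s : Finset ι} {f : ι → α} {x : α} (hx : 0 ≤ x)
    (hf₀ : ∀ i ∈ s, 0 ≤ f i) (hf : (s : Set ι).Pairwise fun i j => f i ⊓ f j = 0) :
    x ⊓ ∑ i ∈ s, f i = ∑ i ∈ s, x ⊓ f i := by
  let _ : DistribLattice α := AddCommGroup.toDistribLattice α
  induction s using Finset.cons_induction generalizing x with
  | empty => simpa using hx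
  | cons j s hj ih =>
    have hf₀' : ∀ i ∈ s, 0 ≤ f i := fun i hi => hf₀ i (mem_cons_of_mem hi)
    have hf' : (s : Set ι).Pairwise _ := hf.mono (by simp)
    have hfj : f j ⊓ ∑ i ∈ s, f i = 0 := by
      rw [ih (hf₀ j (mem_cons_self j s)) hf₀' hf']
      refine sum_eq_zero fun i hi => hf (by simp) (by simp [hi]) ?_
      rintro rfl
      exact hj hi
    have hx' : (x ⊓ f j) ⊓ (x ⊓ ∑ i ∈ s, f i) = 0 :=
      inf_eq_zero_of_le_of_le (le_inf hx (hf₀ j (mem_cons_self j s)))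
        (le_inf hx (sum_nonneg hf₀')) inf_le_right inf_le_right hfj
    rw [sum_cons, sum_cons, ← sup_eq_add_of_inf_eq_zero hfj, inf_sup_left,
      sup_eq_add_of_inf_eq_zero hx', ih hx hf₀' hf']

variable [Fintype ι] [Fintype κ]

lemma sum_inf_sum_eq_zero {a : ι → α} {b : κ → α} (ha₀ : ∀ i, 0 ≤ a i) (hb₀ : ∀ k, 0 ≤ b k)
    (ha : Pairwise fun i j => a i ⊓ a j = 0) (hb : Pairwise fun k l => b k ⊓ b l = 0)
    (hab : ∀ i k, a i ⊓ b k = 0) : (∑ i, a i) ⊓ ∑ k, b k = 0 := by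
  rw [inf_sum_eq_sum_inf (sum_nonneg fun i _ => ha₀ i) (fun k _ => hb₀ k) (hb.set_pairwise _)]
  refine sum_eq_zero fun k _ => ?_
  rw [inf_comm, inf_sum_eq_sum_inf (hb₀ k) (fun i _ => ha₀ i) (ha.set_pairwise _)]
  exact sum_eq_zero fun i _ => inf_comm (b k) (a i) ▸ hab i k

lemma sum_inf_eq_of_sum_eq {a : ι → α} {b : κ → α} (ha₀ : ∀ i, 0 ≤ a i) (hb₀ : ∀ k, 0 ≤ b k)
    (hb : Pairwise fun k l => b k ⊓ b l = 0) (hab : ∑ i, a i = ∑ k, b k) (i : ι) :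
    ∑ k, a i ⊓ b k = a i := by
  rw [← inf_sum_eq_sum_inf (ha₀ i) (fun k _ => hb₀ k) (hb.set_pairwise _), ← hab]
  exact inf_eq_left.mpr (single_le_sum (fun j _ => ha₀ j) (mem_univ i))

lemma sum_eq_sum_posPart_sub_sum_negPart (f : ι → α) :
    ∑ i, f i = ∑ i, (f i)⁺ - ∑ i, (f i)⁻ := by
  simp only [← sum_sub_distrib, posPart_sub_negPart]

lemma sum_posPart_inf_sum_negPart {f : ι → α} (hf : Pairwise (RDisjoint on f)) :
    (∑ i, (f i)⁺) ⊓ ∑ i, (f i)⁻ = 0 :=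
  sum_inf_sum_eq_zero (fun _ => posPart_nonneg _) (fun _ => negPart_nonneg _)
    hf.posPart_inf_posPart hf.negPart_inf_negPart hf.posPart_inf_negPart

lemma posPart_sum {f : ι → α} (hf : Pairwise (RDisjoint on f)) :
    (∑ i, f i)⁺ = ∑ i, (f i)⁺ := by
  rw [sum_eq_sum_posPart_sub_sum_negPart,
    posPart_sub_of_inf_eq_zero (sum_posPart_inf_sum_negPart hf)]

lemma negPart_sum {f : ι → α} (hf : Pairwise (RDisjoint on f)) :
    (∑ i, f i)⁻ = ∑ i, (f i)⁻ := by
  rw [sum_eq_sum_posPart_sub_sum_negPart,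
    negPart_sub_of_inf_eq_zero (sum_posPart_inf_sum_negPart hf)]

end LatticeOrderedAddCommGroup

section LateralInf

variable {α ι κ : Type*} [Lattice α] [AddCommGroup α]

/-- For fragments `x` and `y` of a common element, this is their meet in the Boolean algebra of
fragments of that element. -/
def lateralInf (x y : α) : α := x⁺ ⊓ y⁺ - x⁻ ⊓ y⁻

lemma lateralInf_comm (x y : α) : lateralInf x y = lateralInf y x := by
  rw [lateralInf, lateralInf, inf_comm x⁺, inf_comm x⁻]

variable [AddLeftMono α]

lemma pairwise_rdisjoint_lateralInf {f : ι → α} {g : κ → α} (hf : Pairwise (RDisjoint on f))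
    (hg : Pairwise (RDisjoint on g)) :
    Pairwise fun p q : ι × κ =>
      RDisjoint (lateralInf (f p.1) (g p.2)) (lateralInf (f q.1) (g q.2)) := by
  have hP := pairwise_inf_inf_eq_zero (fun _ => posPart_nonneg _) (fun _ => posPart_nonneg _)
    hf.posPart_inf_posPart hg.posPart_inf_posPart
  have hQ := pairwise_inf_inf_eq_zero (fun _ => negPart_nonneg _) (fun _ => negPart_nonneg _)
    hf.negPart_inf_negPart hg.negPart_inf_negPart
  have hPQ (i j : ι) (k l : κ) : ((f i)⁺ ⊓ (g k)⁺) ⊓ ((f j)⁻ ⊓ (g l)⁻) = 0 := by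
    rw [inf_inf_inf_comm, hf.posPart_inf_negPart,
      inf_eq_left.mpr (le_inf (posPart_nonneg _) (negPart_nonneg _))]
  rintro ⟨i, k⟩ ⟨j, l⟩ hne
  exact rdisjoint_sub_sub (hPQ i i k k) (hPQ j j l l) (hP hne) (hPQ i j k l)
    (by rw [inf_comm]; exact hPQ j i l k) (hQ hne)

lemma sum_lateralInf_of_sum_eq [Fintype ι] [Fintype κ] {f : ι → α} {g : κ → α}
    (hf : Pairwise (RDisjoint on f)) (hg : Pairwise (RDisjoint on g))
    (hfg : ∑ i, f i = ∑ k, g k) (i : ι) : ∑ k, lateralInf (f i) (g k) = f i := by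
  have hpos : ∑ i, (f i)⁺ = ∑ k, (g k)⁺ := by rw [← posPart_sum hf, ← posPart_sum hg, hfg]
  have hneg : ∑ i, (f i)⁻ = ∑ k, (g k)⁻ := by rw [← negPart_sum hf, ← negPart_sum hg, hfg]
  simp only [lateralInf]
  rw [sum_sub_distrib,
    sum_inf_eq_of_sum_eq (fun _ => posPart_nonneg _) (fun _ => posPart_nonneg _)
      hg.posPart_inf_posPart hpos,
    sum_inf_eq_of_sum_eq (fun _ => negPart_nonneg _) (fun _ => negPart_nonneg _)
      hg.negPart_inf_negPart hneg, posPart_sub_negPart]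

end LateralInf

/-- Lateral analogue of the Riesz decomposition property (Pliev's lemma). -/
theorem lateral_riesz_decomposition {m n : ℕ} (e : E) (u : Fin m → E) (v : Fin n → E)
    (hu : ∀ i j, i ≠ j → RDisjoint (u i) (u j))
    (hv : ∀ k l, k ≠ l → RDisjoint (v k) (v l))
    (heu : e = ∑ i, u i) (hev : e = ∑ k, v k) :
    ∃ w : Fin m → Fin n → E,
      (∀ (p q : Fin m × Fin n), p ≠ q → RDisjoint (w p.1 p.2) (w q.1 q.2)) ∧
      (∀ i, u i = ∑ k, w i k) ∧
      (∀ k, v k = ∑ i, w i k) := by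
  replace hu : Pairwise (RDisjoint on u) := fun i j => hu i j
  replace hv : Pairwise (RDisjoint on v) := fun k l => hv k l
  refine ⟨fun i k => lateralInf (u i) (v k), fun p q hpq => pairwise_rdisjoint_lateralInf hu hv hpq,
    fun i => (sum_lateralInf_of_sum_eq hu hv (heu.symm.trans hev) i).symm, fun k => ?_⟩
  simp only [lateralInf_comm (u _)]
  exact (sum_lateralInf_of_sum_eq hv hu (hev.symm.trans heu) k).symm
end

section
/- Let $E, F$ be Riesz spaces and $T : E \to F$ an orthogonally additive operator. If for every $x \in E$ the supremum $R(x) = \sup\{T(u) - T(v) : x = u \sqcup v\}$ exists in $F$, then the modulus $|T| = T \vee (-T)$ exists in the ordered vector space of orthogonally additive operators and $|T|(x) = R(x)$ for all $x \in E$. -/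
variable {E F : Type*}
  [Lattice E] [AddCommGroup E] [CovariantClass E E (· + ·) (· ≤ ·)]
  [Lattice F] [AddCommGroup F] [CovariantClass F F (· + ·) (· ≤ ·)]

/-!
For a disjoint decomposition `x = u ⊔ v` the difference `T u - T v` is bounded by `P u + P v = P x`
for every orthogonally additive `P ≥ ±T`, and `±T x` are such differences (take `v = 0` or `u = 0`);
so `R` is the least common upper bound of `T` and `-T` once it is orthogonally additive.
That holds because the sets `D x = {T u - T v : x = u ⊔ v}` satisfy `D (x + y) = D x + D y`
for `x ⊥ y`: a disjoint decomposition of `x + y` refines, by Riesz decomposition along `|x|` and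
`|y|`, into disjoint decompositions of `x` and of `y`. Suprema then add up.
-/

open Pointwise

section LatticeOrderedGroup

variable {G : Type*} [Lattice G] [AddCommGroup G] {a b c d w x y u v : G}

theorem RDisjoint.symm (h : RDisjoint a b) : RDisjoint b a := by
  rwa [RDisjoint, inf_comm]

variable [AddLeftMono G]

theorem inf_add_le_inf_add_inf (ha : 0 ≤ a) (hb : 0 ≤ b) (hc : 0 ≤ c) :
    a ⊓ (b + c) ≤ a ⊓ b + a ⊓ c := by
  have key : a ⊓ (b + c) - a ⊓ b ≤ a ⊓ c := by
    rw [sub_inf]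
    refine sup_le ((sub_nonpos.2 inf_le_left).trans (le_inf ha hc)) (le_inf ?_ ?_)
    · exact (sub_le_sub_right inf_le_left b).trans (sub_le_self a hb)
    · exact (sub_le_sub_right inf_le_right b).trans (add_sub_cancel_left b c).le
  exact (sub_le_iff_le_add.1 key).trans_eq (add_comm _ _)

theorem abs_sub_le_sup_of_nonneg (ha : 0 ≤ a) (hb : 0 ≤ b) : |a - b| ≤ a ⊔ b := by
  rw [abs_sub_comm, ← sup_sub_inf_eq_abs_sub]
  exact sub_le_self _ (le_inf ha hb)

namespace RDisjoint

theorem mono (h : RDisjoint c d) (hac : |a| ≤ |c|) (hbd : |b| ≤ |d|) : RDisjoint a b :=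
  le_antisymm ((inf_le_inf hac hbd).trans_eq h) (le_inf (abs_nonneg a) (abs_nonneg b))

theorem zero_right (a : G) : RDisjoint a 0 := by
  simp [RDisjoint]

theorem zero_left (a : G) : RDisjoint 0 a :=
  (zero_right a).symm

theorem add_left (ha : RDisjoint a c) (hb : RDisjoint b c) : RDisjoint (a + b) c := by
  refine le_antisymm ?_ (le_inf (abs_nonneg _) (abs_nonneg c))
  calc |a + b| ⊓ |c| ≤ |c| ⊓ (|a| + |b|) := by
        rw [inf_comm]; exact inf_le_inf_left _ (abs_add_le a b)
    _ ≤ |c| ⊓ |a| + |c| ⊓ |b| :=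
        inf_add_le_inf_add_inf (abs_nonneg c) (abs_nonneg a) (abs_nonneg b)
    _ = 0 := by rw [inf_comm |c|, inf_comm |c|, show |a| ⊓ |c| = 0 from ha,
        show |b| ⊓ |c| = 0 from hb, add_zero]

theorem add_right (hb : RDisjoint a b) (hc : RDisjoint a c) : RDisjoint a (b + c) :=
  (hb.symm.add_left hc.symm).symm

theorem sub_left (ha : RDisjoint a c) (hb : RDisjoint b c) : RDisjoint (a - b) c := by
  rw [sub_eq_add_neg]
  exact ha.add_left (hb.mono (abs_neg b).le le_rfl)

theorem sub_right (hb : RDisjoint a b) (hc : RDisjoint a c) : RDisjoint a (b - c) :=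
  (hb.symm.sub_left hc.symm).symm

theorem eq_zero_of_self (h : RDisjoint a a) : a = 0 := by
  rw [RDisjoint, inf_idem] at h
  exact le_antisymm ((le_abs_self a).trans h.le) (neg_nonpos.1 ((neg_le_abs a).trans h.le))

theorem abs_left_le_abs_add (h : RDisjoint a b) : |a| ≤ |a + b| :=
  calc |a| = |a| ⊓ (|a + b| + |b|) := by
        refine (inf_eq_left.2 ?_).symm
        simpa using abs_add_le (a + b) (-b)
    _ ≤ |a| ⊓ |a + b| + |a| ⊓ |b| :=
        inf_add_le_inf_add_inf (abs_nonneg a) (abs_nonneg _) (abs_nonneg b)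
    _ = |a| ⊓ |a + b| := by rw [show |a| ⊓ |b| = 0 from h, add_zero]
    _ ≤ |a + b| := inf_le_right

theorem abs_right_le_abs_add (h : RDisjoint a b) : |b| ≤ |a + b| :=
  add_comm a b ▸ h.symm.abs_left_le_abs_add

theorem inf_abs_add_inf_abs_eq (hxy : RDisjoint x y) (hw : 0 ≤ w) (h : w ≤ |x| + |y|) :
    w ⊓ |x| + w ⊓ |y| = w := by
  have hdisj : (w ⊓ |x|) ⊓ (w ⊓ |y|) = 0 :=
    le_antisymm ((inf_le_inf inf_le_right inf_le_right).trans_eq hxy)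
      (le_inf (le_inf hw (abs_nonneg x)) (le_inf hw (abs_nonneg y)))
  refine le_antisymm ?_ ?_
  · rw [← inf_add_sup (w ⊓ |x|), hdisj, zero_add]
    exact sup_le inf_le_left inf_le_left
  · calc w = w ⊓ (|x| + |y|) := (inf_eq_left.2 h).symm
      _ ≤ w ⊓ |x| + w ⊓ |y| := inf_add_le_inf_add_inf hw (abs_nonneg x) (abs_nonneg y)

theorem exists_add_of_abs_le (hxy : RDisjoint x y) (hu : |u| ≤ |x| + |y|) :
    ∃ u₁ u₂, u = u₁ + u₂ ∧ |u₁| ≤ |u| ⊓ |x| ∧ |u₂| ≤ |u| ⊓ |y| := by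
  have hpos : u⁺ ≤ |u| := by rw [posPart_def]; exact sup_le (le_abs_self u) (abs_nonneg u)
  have hneg : u⁻ ≤ |u| := by rw [negPart_def]; exact sup_le (neg_le_abs u) (abs_nonneg u)
  have bound (z : G) : |(u⁺ ⊓ |z| - u⁻ ⊓ |z|)| ≤ |u| ⊓ |z| :=
    (abs_sub_le_sup_of_nonneg (le_inf (posPart_nonneg u) (abs_nonneg z))
      (le_inf (negPart_nonneg u) (abs_nonneg z))).trans
      (sup_le (inf_le_inf_right _ hpos) (inf_le_inf_right _ hneg))
  refine ⟨u⁺ ⊓ |x| - u⁻ ⊓ |x|, u⁺ ⊓ |y| - u⁻ ⊓ |y|, ?_, bound x, bound y⟩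
  calc u = u⁺ - u⁻ := (posPart_sub_negPart u).symm
    _ = (u⁺ ⊓ |x| + u⁺ ⊓ |y|) - (u⁻ ⊓ |x| + u⁻ ⊓ |y|) := by
        rw [hxy.inf_abs_add_inf_abs_eq (posPart_nonneg u) (hpos.trans hu),
          hxy.inf_abs_add_inf_abs_eq (negPart_nonneg u) (hneg.trans hu)]
    _ = u⁺ ⊓ |x| - u⁻ ⊓ |x| + (u⁺ ⊓ |y| - u⁻ ⊓ |y|) := by abel

theorem exists_refinement (hxy : RDisjoint x y) (huv : RDisjoint u v) (h : x + y = u + v) :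
    ∃ u₁ u₂ v₁ v₂, u = u₁ + u₂ ∧ v = v₁ + v₂ ∧ x = u₁ + v₁ ∧ y = u₂ + v₂ ∧
      RDisjoint u₁ v₁ ∧ RDisjoint u₂ v₂ ∧ RDisjoint u₁ u₂ ∧ RDisjoint v₁ v₂ := by
  have hsum : |x + y| ≤ |x| + |y| := abs_add_le x y
  rw [h] at hsum
  obtain ⟨u₁, u₂, rfl, hu₁, hu₂⟩ := hxy.exists_add_of_abs_le (huv.abs_left_le_abs_add.trans hsum)
  obtain ⟨v₁, v₂, rfl, hv₁, hv₂⟩ := hxy.exists_add_of_abs_le (huv.abs_right_le_abs_add.trans hsum)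
  have perp {p q : G} (hp : |p| ≤ |x|) (hq : |q| ≤ |y|) : RDisjoint p q := hxy.mono hp hq
  have perp_rest {p : G} (hp : |p| ≤ |x|) : RDisjoint p (y - (u₂ + v₂)) :=
    (perp hp le_rfl).sub_right
      ((perp hp (hu₂.trans inf_le_right)).add_right (perp hp (hv₂.trans inf_le_right)))
  -- The defect `u₁ + v₁ - x = y - (u₂ + v₂)` is built from `x`-small and `y`-small parts alike,
  -- so it is disjoint from itself.
  have hdisj : RDisjoint (u₁ + v₁ - x) (y - (u₂ + v₂)) :=
    ((perp_rest (hu₁.trans inf_le_right)).add_left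
      (perp_rest (hv₁.trans inf_le_right))).sub_left (perp_rest le_rfl)
  have heq : u₁ + v₁ - x = y - (u₂ + v₂) := by
    rw [sub_eq_sub_iff_add_eq_add, add_comm y x, h]; abel
  rw [← heq] at hdisj
  have hx : x = u₁ + v₁ := (sub_eq_zero.1 hdisj.eq_zero_of_self).symm
  have hy : y = u₂ + v₂ := by
    rw [hx] at h
    exact add_left_cancel (h.trans (by abel))
  exact ⟨u₁, u₂, v₁, v₂, rfl, rfl, hx, hy,
    huv.mono (hu₁.trans inf_le_left) (hv₁.trans inf_le_left),
    huv.mono (hu₂.trans inf_le_left) (hv₂.trans inf_le_left),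
    perp (hu₁.trans inf_le_right) (hu₂.trans inf_le_right),
    perp (hv₁.trans inf_le_right) (hv₂.trans inf_le_right)⟩

end RDisjoint

end LatticeOrderedGroup

def decompDiffs {X Y : Type*} [Lattice X] [AddCommGroup X] [AddCommGroup Y] (T : X → Y)
    (x : X) : Set Y :=
  {z | ∃ u v : X, RDisjoint u v ∧ x = u + v ∧ z = T u - T v}

section OrthogonallyAdditive

variable {X Y : Type*} [Lattice X] [AddCommGroup X] [Lattice Y] [AddCommGroup Y] {T : X → Y}

theorem IsOAO.mem_upperBounds_decompDiffs [AddLeftMono Y] {P : X → Y} (hP : IsOAO P)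
    (hTP : ∀ x, T x ≤ P x) (hTP' : ∀ x, -T x ≤ P x) (x : X) :
    P x ∈ upperBounds (decompDiffs T x) := by
  rintro _ ⟨u, v, huv, rfl, rfl⟩
  rw [hP u v huv, sub_eq_add_neg]
  exact add_le_add (hTP u) (hTP' v)

variable [AddLeftMono X]

theorem IsOAO.map_zero (hT : IsOAO T) : T 0 = 0 := by
  simpa using hT 0 0 (RDisjoint.zero_right 0)

theorem IsOAO.apply_mem_decompDiffs (hT : IsOAO T) (x : X) : T x ∈ decompDiffs T x :=
  ⟨x, 0, RDisjoint.zero_right x, (add_zero x).symm, by rw [hT.map_zero, sub_zero]⟩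

theorem IsOAO.neg_apply_mem_decompDiffs (hT : IsOAO T) (x : X) : -T x ∈ decompDiffs T x :=
  ⟨0, x, RDisjoint.zero_left x, (zero_add x).symm, by rw [hT.map_zero, zero_sub]⟩

theorem IsOAO.decompDiffs_add (hT : IsOAO T) {x y : X} (hxy : RDisjoint x y) :
    decompDiffs T (x + y) = decompDiffs T x + decompDiffs T y := by
  ext c
  constructor
  · rintro ⟨u, v, huv, h, rfl⟩
    obtain ⟨u₁, u₂, v₁, v₂, rfl, rfl, hx, hy, h₁, h₂, hu, hv⟩ := hxy.exists_refinement huv h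
    refine ⟨T u₁ - T v₁, ⟨u₁, v₁, h₁, hx, rfl⟩, T u₂ - T v₂, ⟨u₂, v₂, h₂, hy, rfl⟩, ?_⟩
    beta_reduce
    rw [hT _ _ hu, hT _ _ hv]
    abel
  · rintro ⟨_, ⟨u₁, v₁, h₁, rfl, rfl⟩, _, ⟨u₂, v₂, h₂, rfl, rfl⟩, rfl⟩
    have hu : RDisjoint u₁ u₂ := hxy.mono h₁.abs_left_le_abs_add h₂.abs_left_le_abs_add
    have hv : RDisjoint v₁ v₂ := hxy.mono h₁.abs_right_le_abs_add h₂.abs_right_le_abs_add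
    have hu₁v₂ : RDisjoint u₁ v₂ := hxy.mono h₁.abs_left_le_abs_add h₂.abs_right_le_abs_add
    have hu₂v₁ : RDisjoint u₂ v₁ := hxy.symm.mono h₂.abs_left_le_abs_add h₁.abs_right_le_abs_add
    refine ⟨u₁ + u₂, v₁ + v₂, (h₁.add_right hu₁v₂).add_left (hu₂v₁.add_right h₂), by abel, ?_⟩
    beta_reduce
    rw [hT _ _ hu, hT _ _ hv]
    abel

end OrthogonallyAdditive

/-- If `R x = sup {T u - T v : x = u ⊔ v}` exists for all `x`, then `R = |T| = T ∨ (-T)`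
in the ordered vector space of OAOs. -/
theorem oao_abs_exists (T : E → F) (hT : IsOAO T) (R : E → F)
    (hR : ∀ x : E,
      IsLUB {z : F | ∃ u v : E, RDisjoint u v ∧ x = u + v ∧ z = T u - T v} (R x)) :
    IsOAO R ∧ (∀ x, T x ≤ R x) ∧ (∀ x, -T x ≤ R x) ∧
    ∀ P : E → F, IsOAO P → (∀ x, T x ≤ P x) → (∀ x, -T x ≤ P x) → ∀ x, R x ≤ P x := by
  have hR' : ∀ x, IsLUB (decompDiffs T x) (R x) := hR
  refine ⟨fun x y hxy => ?_, fun x => (hR' x).1 (hT.apply_mem_decompDiffs x),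
    fun x => (hR' x).1 (hT.neg_apply_mem_decompDiffs x),
    fun P hP hTP hTP' x => (hR' x).2 (hP.mem_upperBounds_decompDiffs hTP hTP' x)⟩
  refine (hR' (x + y)).unique ?_
  rw [hT.decompDiffs_add hxy]
  exact (hR' x).add (hR' y)
end
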